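/- Let η ∈ ℝ and define λ₃ : ℝ³ → ℝ by λ₃(u,v,w) = 2η(w − vu) + 4. Then λ₃ is differentiable, and for every U = (u,v,w) ∈ ℝ³ the directional derivative of λ₃ at U in the direction r₃(U) = (1,0,v−2) equals −4η: (fderiv λ₃ U)(1,0,v−2) = −4η. In particular, if η > 0 the third characteristic family of the Baiti–Jenssen system is genuinely nonlinear with genuine nonlinearity constant 4η (after reorienting the eigenvector field). -/

import Mathlib

/-- The third characteristic speed of the Baiti–Jenssen system with parameter `η`. -/
noncomputable def BJlambda3 (η : ℝ) : ℝ × ℝ × ℝ → ℝ :=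
  fun U => 2 * η * (U.2.2 - U.2.1 * U.1) + 4

open ContinuousLinearMap in
theorem hasFDerivAt_BJlambda3 (η : ℝ) (U : ℝ × ℝ × ℝ) :
    HasFDerivAt (BJlambda3 η)
      ((2 * η) • (snd ℝ ℝ ℝ ∘L snd ℝ ℝ (ℝ × ℝ) -
        (U.2.1 • fst ℝ ℝ (ℝ × ℝ) + U.1 • (fst ℝ ℝ ℝ ∘L snd ℝ ℝ (ℝ × ℝ))))) U :=
  (((hasFDerivAt_snd.comp U hasFDerivAt_snd).sub
    ((hasFDerivAt_fst.comp U hasFDerivAt_snd).mul hasFDerivAt_fst)).const_mul (2 * η)).add_const 4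

theorem differentiable_BJlambda3 (η : ℝ) : Differentiable ℝ (BJlambda3 η) :=
  fun U => (hasFDerivAt_BJlambda3 η U).differentiableAt

theorem fderiv_BJlambda3_apply (η : ℝ) (U d : ℝ × ℝ × ℝ) :
    fderiv ℝ (BJlambda3 η) U d = 2 * η * (d.2.2 - (U.2.1 * d.1 + U.1 * d.2.1)) := by
  simp [(hasFDerivAt_BJlambda3 η U).fderiv]

theorem fderiv_BJlambda3_apply_r3 (η u v w : ℝ) :
    fderiv ℝ (BJlambda3 η) (u, v, w) ((1 : ℝ), (0 : ℝ), v - 2) = -(4 * η) := by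
  rw [fderiv_BJlambda3_apply]
  ring

theorem bj_gn3 (η : ℝ) :
    Differentiable ℝ (BJlambda3 η) ∧
    (∀ u v w : ℝ,
      fderiv ℝ (BJlambda3 η) (u, v, w) ((1 : ℝ), (0 : ℝ), v - 2) = -(4 * η)) ∧
    (0 < η → ∀ u v w : ℝ,
      0 < 4 * η ∧
        4 * η ≤ |fderiv ℝ (BJlambda3 η) (u, v, w) ((1 : ℝ), (0 : ℝ), v - 2)|) := by
  refine ⟨differentiable_BJlambda3 η, fderiv_BJlambda3_apply_r3 η, fun hη u v w => ?_⟩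
  have h4η : 0 < 4 * η := by positivity
  rw [fderiv_BJlambda3_apply_r3, abs_neg, abs_of_pos h4η]
  exact ⟨h4η, le_rfl⟩
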